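/- Let R : [0,T]² → ℝ be a continuous function of bounded planar variation (so its planar increments are given by a finite signed measure μ). Then R has zero planar quadratic variation: (1/ε)∫₀ᵀ (Δ_{]t,t+ε]²} R)² dt → 0 as ε → 0. -/

import Mathlib

open Set MeasureTheory Filter
open scoped Topology

noncomputable section

/-- Planar increment of `R` over the rectangle `]a₁,b₁] × ]a₂,b₂]`. -/
def planarInc (R : ℝ × ℝ → ℝ) (a₁ b₁ a₂ b₂ : ℝ) : ℝ :=
  R (b₁, b₂) + R (a₁, a₂) - R (a₁, b₂) - R (b₁, a₂)

/-
By uniform continuity the diagonal increments `Δ_{]t,t+ε]²} R` are uniformly small, say `≤ η`, for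
small `ε`. Writing `|μ|` for the total variation of `μ` and `F t := |μ|(]-∞,t] × ℝ)`, the bound
`|Δ_{]t,t+ε]²} R| ≤ |μ|(]t,t+ε]²) ≤ F (t + ε) - F t` gives
`(1/ε) (Δ_{]t,t+ε]²} R)² ≤ η · (F (t + ε) - F t) / ε`, and the integral over `[0,T]` of the
difference quotient of the monotone function `F` is at most `F (T + ε) - F 0 ≤ |μ|(ℝ²)`.
-/

lemma eventually_abs_planarInc_diag_lt {R : ℝ × ℝ → ℝ} (hR : Continuous R) {K : Set ℝ}
    (hK : IsCompact K) {η : ℝ} (hη : 0 < η) :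
    ∀ᶠ ε in 𝓝 0, ∀ t ∈ K, |planarInc R t (t + ε) t (t + ε)| < η := by
  refine hK.eventually_forall_of_forall_eventually fun t _ => ?_
  have hcont : Continuous fun p : ℝ × ℝ => |planarInc R p.2 (p.2 + p.1) p.2 (p.2 + p.1)| := by
    unfold planarInc; fun_prop
  refine (hcont.tendsto (0, t)).eventually_lt_const ?_
  simpa [planarInc] using hη

lemma measureReal_preimage_fst_Ioc {β : Type*} [MeasurableSpace β] (ν : Measure (ℝ × β))
    [IsFiniteMeasure ν] {a b : ℝ} (hab : a ≤ b) :
    ν.real (Prod.fst ⁻¹' Ioc a b) = ν.real (Prod.fst ⁻¹' Iic b) - ν.real (Prod.fst ⁻¹' Iic a) := by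
  rw [← Iic_sdiff_Iic, preimage_sdiff, measureReal_sdiff (preimage_mono (Iic_subset_Iic.2 hab))
    (measurableSet_Iic.preimage measurable_fst)]

lemma abs_planarInc_le_totalVariation {R : ℝ × ℝ → ℝ} {μ : SignedMeasure (ℝ × ℝ)}
    (hμ : ∀ a₁ b₁ a₂ b₂ : ℝ, a₁ ≤ b₁ → a₂ ≤ b₂ →
      μ (Ioc a₁ b₁ ×ˢ Ioc a₂ b₂) = planarInc R a₁ b₁ a₂ b₂)
    {a₁ b₁ a₂ b₂ : ℝ} (h₁ : a₁ ≤ b₁) (h₂ : a₂ ≤ b₂) :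
    |planarInc R a₁ b₁ a₂ b₂| ≤ μ.totalVariation.real (Prod.fst ⁻¹' Ioc a₁ b₁) := by
  rw [← hμ _ _ _ _ h₁ h₂, ← Real.norm_eq_abs]
  exact (μ.norm_le_totalVariation _).trans (measureReal_mono fun p hp => hp.1)

lemma one_div_mul_integral_sq_planarInc_diag_le {R : ℝ × ℝ → ℝ} (hR : Continuous R)
    {μ : SignedMeasure (ℝ × ℝ)}
    (hμ : ∀ a₁ b₁ a₂ b₂ : ℝ, a₁ ≤ b₁ → a₂ ≤ b₂ →
      μ (Ioc a₁ b₁ ×ˢ Ioc a₂ b₂) = planarInc R a₁ b₁ a₂ b₂)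
    {T ε η : ℝ} (hT : 0 ≤ T) (hε : 0 < ε)
    (hη : ∀ t ∈ Icc 0 T, |planarInc R t (t + ε) t (t + ε)| ≤ η) :
    (1 / ε) * ∫ t in Ioc 0 T, (planarInc R t (t + ε) t (t + ε)) ^ 2
      ≤ η * μ.totalVariation.real univ := by
  set ν := μ.totalVariation
  set F : ℝ → ℝ := fun t => ν.real (Prod.fst ⁻¹' Iic t)
  have hF : Monotone F := fun a b hab => measureReal_mono (preimage_mono (Iic_subset_Iic.2 hab))
  have hη₀ : 0 ≤ η := (abs_nonneg _).trans (hη 0 ⟨le_rfl, hT⟩)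
  have hpointwise : ∀ t ∈ Icc 0 T,
      (1 / ε) * planarInc R t (t + ε) t (t + ε) ^ 2 ≤ η * slope F t (t + ε) := by
    intro t ht
    have hle : t ≤ t + ε := by linarith
    have hν : |planarInc R t (t + ε) t (t + ε)| ≤ F (t + ε) - F t :=
      (abs_planarInc_le_totalVariation hμ hle hle).trans_eq (measureReal_preimage_fst_Ioc ν hle)
    have hΔ := hη t ht
    set Δ := planarInc R t (t + ε) t (t + ε)
    rw [slope_def_field, add_sub_cancel_left]
    calc (1 / ε) * Δ ^ 2 = |Δ| * |Δ| / ε := by rw [← sq_abs]; ring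
      _ ≤ η * (F (t + ε) - F t) / ε := by gcongr
      _ = η * ((F (t + ε) - F t) / ε) := mul_div_assoc _ _ _
  have hsq : Continuous fun t => (1 / ε) * planarInc R t (t + ε) t (t + ε) ^ 2 := by
    unfold planarInc; fun_prop
  calc (1 / ε) * ∫ t in Ioc 0 T, (planarInc R t (t + ε) t (t + ε)) ^ 2
      = ∫ t in 0..T, (1 / ε) * planarInc R t (t + ε) t (t + ε) ^ 2 := by
        rw [intervalIntegral.integral_of_le hT, integral_const_mul]
    _ ≤ ∫ t in 0..T, η * slope F t (t + ε) :=
        intervalIntegral.integral_mono_on hT (hsq.intervalIntegrable _ _)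
          (((hF.monotoneOn _).intervalIntegrable_slope hT hε.le).const_mul η) hpointwise
    _ ≤ η * (F (T + ε) - F 0) := by
        rw [intervalIntegral.integral_const_mul]
        exact mul_le_mul_of_nonneg_left
          ((hF.monotoneOn _).intervalIntegral_slope_le hT hε.le) hη₀
    _ ≤ η * ν.real univ := by
        gcongr
        linarith [measureReal_mono (μ := ν) (subset_univ (Prod.fst ⁻¹' Iic (T + ε))),
          measureReal_nonneg (μ := ν) (s := Prod.fst ⁻¹' Iic 0)]

theorem stmt_4 (T : ℝ) (hT : 0 < T) (R : ℝ × ℝ → ℝ) (hcont : Continuous R)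
    (μ : SignedMeasure (ℝ × ℝ))
    (hμ : ∀ a₁ b₁ a₂ b₂ : ℝ, a₁ ≤ b₁ → a₂ ≤ b₂ →
      μ (Ioc a₁ b₁ ×ˢ Ioc a₂ b₂) = planarInc R a₁ b₁ a₂ b₂) :
    Tendsto (fun ε : ℝ => (1 / ε) * ∫ t in Ioc (0 : ℝ) T, (planarInc R t (t + ε) t (t + ε)) ^ 2)
      (𝓝[>] 0) (𝓝 0) := by
  refine tendsto_order.2 ⟨fun a ha => ?_, fun a ha => ?_⟩
  · filter_upwards [self_mem_nhdsWithin] with ε (hε : 0 < ε)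
    exact ha.trans_le (mul_nonneg (by positivity) (integral_nonneg fun _ => sq_nonneg _))
  · obtain ⟨η, hη, hηa⟩ := exists_pos_mul_lt ha (μ.totalVariation.real univ)
    filter_upwards [self_mem_nhdsWithin,
      nhdsWithin_le_nhds (eventually_abs_planarInc_diag_lt hcont isCompact_Icc hη)]
      with ε hε hsmall
    rw [mul_comm] at hηa
    exact (one_div_mul_integral_sq_planarInc_diag_le hcont hμ hT.le hε
      fun t ht => (hsmall t ht).le).trans_lt hηa
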